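/- Let n ≥ 1 and let K ⊂ ℝⁿ be a compact convex body with nonempty interior whose support function satisfies h_K(ξ)² = P(ξ) for all ξ ∈ ℝⁿ, where P is a homogeneous quadratic polynomial on ℝⁿ. Then K is an origin-symmetric ellipsoid, i.e., K is the image of the closed unit ball under an invertible linear map. -/

import Mathlib

open MeasureTheory

/-- The support function of `K`. -/
noncomputable def suppFun {n : ℕ} (K : Set (EuclideanSpace ℝ (Fin n)))
    (ξ : EuclideanSpace ℝ (Fin n)) : ℝ :=
  sSup ((fun x => (inner ℝ x ξ : ℝ)) '' K)

/-!
Write `h_K(ξ)² = ξᵀMξ` with `M` symmetric. As `ξᵀMξ ≥ 0`, `M = BᵀB` for some matrix `B`. The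
form is even, so `h_K(-ξ) = ±h_K(ξ)`, while a ball inside `K` gives `h_K(ξ) + h_K(-ξ) ≥ 2r‖ξ‖`;
hence `h_K(ξ) > 0` for `ξ ≠ 0`, so `h_K = ‖B ·‖` with `B` injective. The support function of
`Bᵀ(closedBall 0 1)` is also `‖B ·‖`, and a compact convex set is determined by its support
function (Hahn–Banach), so `K = Bᵀ(closedBall 0 1)`.
-/

open Matrix MvPolynomial Metric
open scoped MatrixOrder

theorem Finsupp.exists_eq_single_add_single_of_degree_eq_two {σ : Type*} {d : σ →₀ ℕ}
    (hd : d.degree = 2) : ∃ a b, d = single a 1 + single b 1 := by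
  classical
  have hcard : Multiset.card (toMultiset d) = 2 := by
    simpa [card_toMultiset, Finsupp.sum] using (degree_apply d).symm.trans hd
  obtain ⟨a, b, hab⟩ := Multiset.card_eq_two.mp hcard
  refine ⟨a, b, ?_⟩
  rw [← toMultiset_toFinsupp d, hab, Multiset.insert_eq_cons, ← Multiset.singleton_add,
    Multiset.toFinsupp_add, Multiset.toFinsupp_singleton, Multiset.toFinsupp_singleton]

theorem Matrix.dotProduct_mulVec_single {σ R : Type*} [Fintype σ] [DecidableEq σ]
    [CommSemiring R] (x : σ → R) (a b : σ) (c : R) :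
    x ⬝ᵥ single a b c *ᵥ x = c * x a * x b := by
  rw [single_mulVec, ← Pi.single, dotProduct_single]
  ring

theorem MvPolynomial.IsHomogeneous.exists_eval_eq_dotProduct_mulVec {σ R : Type*} [Fintype σ]
    [DecidableEq σ] [CommSemiring R] {P : MvPolynomial σ R} (hP : P.IsHomogeneous 2) :
    ∃ M : Matrix σ σ R, ∀ x, eval x P = x ⬝ᵥ M *ᵥ x := by
  rw [← support_sum_monomial_coeff P]
  refine Finset.sum_induction _ (fun p ↦ ∃ M : Matrix σ σ R, ∀ x, eval x p = x ⬝ᵥ M *ᵥ x) ?_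
    ⟨0, by simp⟩ fun d hd ↦ ?_
  · rintro p q ⟨M, hM⟩ ⟨N, hN⟩
    exact ⟨M + N, fun x ↦ by rw [eval_add, hM, hN, add_mulVec, dotProduct_add]⟩
  · obtain ⟨a, b, rfl⟩ := Finsupp.exists_eq_single_add_single_of_degree_eq_two
      (not_not.mp (mt hP.coeff_eq_zero (mem_support_iff.mp hd)))
    refine ⟨single a b (coeff (Finsupp.single a 1 + Finsupp.single b 1) P), fun x ↦ ?_⟩
    rw [dotProduct_mulVec_single, eval_monomial,
      Finsupp.prod_add_index' (by simp) (by simp [pow_add])]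
    simp [mul_assoc]

theorem Matrix.exists_isSymm_dotProduct_mulVec_eq {σ R : Type*} [Fintype σ] [CommRing R]
    [Invertible (2 : R)] (M : Matrix σ σ R) :
    ∃ S : Matrix σ σ R, S.IsSymm ∧ ∀ x, x ⬝ᵥ S *ᵥ x = x ⬝ᵥ M *ᵥ x := by
  refine ⟨(⅟2 : R) • (M + Mᵀ), (isSymm_add_transpose_self M).smul _, fun x ↦ ?_⟩
  rw [smul_mulVec, dotProduct_smul, add_mulVec, dotProduct_add, dotProduct_transpose_mulVec,
    smul_eq_mul, ← two_mul, ← mul_assoc, invOf_mul_self, one_mul]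

theorem Matrix.norm_toEuclideanLin_sq {m ι : Type*} [Fintype m] [Fintype ι] [DecidableEq ι]
    (B : Matrix m ι ℝ) (x : EuclideanSpace ℝ ι) :
    ‖toEuclideanLin B x‖ ^ 2 = x.ofLp ⬝ᵥ (Bᵀ * B) *ᵥ x.ofLp := by
  rw [← real_inner_self_eq_norm_sq, EuclideanSpace.inner_eq_star_dotProduct, toLpLin_apply,
    star_trivial, ← mulVec_mulVec, dotProduct_transpose_mulVec]

theorem Matrix.PosSemidef.exists_norm_sq_eq {ι : Type*} [Fintype ι] [DecidableEq ι]
    {M : Matrix ι ι ℝ} (hM : M.PosSemidef) :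
    ∃ T : EuclideanSpace ℝ ι →ₗ[ℝ] EuclideanSpace ℝ ι,
      ∀ x, ‖T x‖ ^ 2 = x.ofLp ⬝ᵥ M *ᵥ x.ofLp := by
  obtain ⟨B, rfl⟩ := CStarAlgebra.nonneg_iff_eq_star_mul_self.mp hM.nonneg
  refine ⟨toEuclideanLin B, fun x ↦ ?_⟩
  rw [norm_toEuclideanLin_sq, star_eq_conjTranspose, conjTranspose_eq_transpose_of_trivial]

theorem LinearMap.bijective_adjoint_of_injective {E : Type*} [NormedAddCommGroup E]
    [InnerProductSpace ℝ E] [FiniteDimensional ℝ E] {T : E →ₗ[ℝ] E}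
    (hT : Function.Injective T) : Function.Bijective T.adjoint := by
  have hker : T.adjoint.ker = ⊥ := by
    rw [← orthogonal_range, range_eq_top.mpr (injective_iff_surjective.mp hT),
      Submodule.top_orthogonal_eq_bot]
  have hinj := ker_eq_bot.mp hker
  exact ⟨hinj, injective_iff_surjective.mp hinj⟩

section SupportFunction

variable {n : ℕ} {K : Set (EuclideanSpace ℝ (Fin n))}

theorem le_suppFun (hK : IsCompact K) {x : EuclideanSpace ℝ (Fin n)} (hx : x ∈ K)
    (ξ : EuclideanSpace ℝ (Fin n)) : inner ℝ x ξ ≤ suppFun K ξ :=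
  le_csSup (hK.image (continuous_id.inner continuous_const)).bddAbove ⟨x, hx, rfl⟩

theorem suppFun_le (hK : K.Nonempty) {ξ : EuclideanSpace ℝ (Fin n)} {c : ℝ}
    (h : ∀ y ∈ K, inner ℝ y ξ ≤ c) : suppFun K ξ ≤ c :=
  csSup_le (hK.image _) (Set.forall_mem_image.mpr h)

theorem suppFun_zero (hK : K.Nonempty) : suppFun K 0 = 0 := by
  simp [suppFun, hK.image_const]

theorem mem_of_forall_inner_le_suppFun (hKconv : Convex ℝ K) (hKcl : IsClosed K)
    (hK : K.Nonempty) {x : EuclideanSpace ℝ (Fin n)} (h : ∀ ξ, inner ℝ x ξ ≤ suppFun K ξ) :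
    x ∈ K := by
  by_contra hx
  obtain ⟨f, u, hfK, hfx⟩ := geometric_hahn_banach_closed_point hKconv hKcl hx
  set ξ := (InnerProductSpace.toDual ℝ _).symm f
  have hf : ∀ y, f y = inner ℝ y ξ := fun y ↦ by
    rw [real_inner_comm, ← InnerProductSpace.toDual_apply_apply,
      LinearIsometryEquiv.apply_symm_apply]
  have := (h ξ).trans (suppFun_le hK fun y hy ↦ (hf y ▸ hfK y hy).le)
  linarith [hf x]

theorem eq_of_suppFun_eq {K' : Set (EuclideanSpace ℝ (Fin n))} (hK : IsCompact K)
    (hKconv : Convex ℝ K) (hKne : K.Nonempty) (hK' : IsCompact K') (hK'conv : Convex ℝ K')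
    (hK'ne : K'.Nonempty) (h : suppFun K = suppFun K') : K = K' :=
  Set.Subset.antisymm
    (fun _ hx ↦ mem_of_forall_inner_le_suppFun hK'conv hK'.isClosed hK'ne fun ξ ↦
      h ▸ le_suppFun hK hx ξ)
    (fun _ hx ↦ mem_of_forall_inner_le_suppFun hKconv hK.isClosed hKne fun ξ ↦
      h ▸ le_suppFun hK' hx ξ)

theorem suppFun_image_closedBall {F : Type*} [NormedAddCommGroup F] [InnerProductSpace ℝ F]
    [FiniteDimensional ℝ F] (T : F →ₗ[ℝ] EuclideanSpace ℝ (Fin n))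
    (ξ : EuclideanSpace ℝ (Fin n)) :
    suppFun (T '' closedBall 0 1) ξ = ‖T.adjoint ξ‖ := by
  set w := T.adjoint ξ
  refine IsGreatest.csSup_eq ⟨⟨T (‖w‖⁻¹ • w), ⟨_, ?_, rfl⟩, ?_⟩, ?_⟩
  · rw [mem_closedBall_zero_iff, norm_smul, norm_inv, norm_norm]
    exact inv_mul_le_one_of_le₀ le_rfl (norm_nonneg w)
  · dsimp only
    rw [← LinearMap.adjoint_inner_right, real_inner_smul_left, real_inner_self_eq_norm_sq, sq,
      ← mul_assoc, inv_mul_mul_self]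
  · rintro _ ⟨_, ⟨y, hy, rfl⟩, rfl⟩
    dsimp only
    rw [← LinearMap.adjoint_inner_right]
    calc inner ℝ y w ≤ ‖y‖ * ‖w‖ := real_inner_le_norm y w
      _ ≤ ‖w‖ := mul_le_of_le_one_left (norm_nonneg w) (mem_closedBall_zero_iff.mp hy)

theorem inner_add_mul_norm_le_suppFun (hK : IsCompact K) {x : EuclideanSpace ℝ (Fin n)} {r : ℝ}
    (hr : 0 ≤ r) (hball : closedBall x r ⊆ K) (ξ : EuclideanSpace ℝ (Fin n)) :
    inner ℝ x ξ + r * ‖ξ‖ ≤ suppFun K ξ := by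
  have hy : x + (r * ‖ξ‖⁻¹) • ξ ∈ K := hball <| by
    rw [mem_closedBall, dist_eq_norm, add_sub_cancel_left, norm_smul, Real.norm_eq_abs, abs_mul,
      abs_of_nonneg hr, abs_inv, abs_norm, mul_assoc]
    exact mul_le_of_le_one_right hr (inv_mul_le_one_of_le₀ le_rfl (norm_nonneg ξ))
  have := le_suppFun hK hy ξ
  rwa [inner_add_left, real_inner_smul_left, real_inner_self_eq_norm_sq, sq, mul_assoc,
    ← mul_assoc _ ‖ξ‖, inv_mul_mul_self] at this

theorem suppFun_pos (hK : IsCompact K) (hKint : (interior K).Nonempty)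
    (heven : ∀ ξ, suppFun K (-ξ) ^ 2 = suppFun K ξ ^ 2) {ξ : EuclideanSpace ℝ (Fin n)}
    (hξ : ξ ≠ 0) : 0 < suppFun K ξ := by
  obtain ⟨x, hx⟩ := hKint
  obtain ⟨r, hr, hball⟩ := nhds_basis_closedBall.mem_iff.mp (mem_interior_iff_mem_nhds.mp hx)
  have h₁ := inner_add_mul_norm_le_suppFun hK hr.le hball ξ
  have h₂ := inner_add_mul_norm_le_suppFun hK hr.le hball (-ξ)
  rw [inner_neg_right, norm_neg] at h₂
  have hsum : 0 < suppFun K ξ + suppFun K (-ξ) := by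
    nlinarith [norm_pos_iff.mpr hξ]
  nlinarith [heven ξ]

theorem eq_adjoint_image_closedBall_of_suppFun_eq_norm (hK : IsCompact K) (hKconv : Convex ℝ K)
    (hKne : K.Nonempty) (T : EuclideanSpace ℝ (Fin n) →ₗ[ℝ] EuclideanSpace ℝ (Fin n))
    (h : ∀ ξ, suppFun K ξ = ‖T ξ‖) : K = T.adjoint '' closedBall 0 1 := by
  refine eq_of_suppFun_eq hK hKconv hKne ((isCompact_closedBall 0 1).image
    T.adjoint.continuous_of_finiteDimensional) ((convex_closedBall 0 1).linear_image _)
    ((nonempty_closedBall.mpr zero_le_one).image _) (funext fun ξ ↦ ?_)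
  rw [suppFun_image_closedBall, LinearMap.adjoint_adjoint, h]

end SupportFunction

theorem ellipsoid_of_quadratic_support_function_squared_general
    {n : ℕ} (K : Set (EuclideanSpace ℝ (Fin n)))
    (hKcpt : IsCompact K) (hKconv : Convex ℝ K) (hKint : (interior K).Nonempty)
    (P : MvPolynomial (Fin n) ℝ) (hP : P.IsHomogeneous 2)
    (hsupp : ∀ ξ : EuclideanSpace ℝ (Fin n),
      (suppFun K ξ) ^ 2 = MvPolynomial.eval (fun i => ξ i) P) :
    ∃ L : EuclideanSpace ℝ (Fin n) →ₗ[ℝ] EuclideanSpace ℝ (Fin n),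
      Function.Bijective L ∧ K = L '' Metric.closedBall 0 1 := by
  obtain ⟨M₀, hM₀⟩ := hP.exists_eval_eq_dotProduct_mulVec
  obtain ⟨M, hMsymm, hM⟩ := M₀.exists_isSymm_dotProduct_mulVec_eq
  have hQ : ∀ ξ, suppFun K ξ ^ 2 = ξ.ofLp ⬝ᵥ M *ᵥ ξ.ofLp := fun ξ ↦
    (hsupp ξ).trans ((hM₀ _).trans (hM _).symm)
  have heven : ∀ ξ, suppFun K (-ξ) ^ 2 = suppFun K ξ ^ 2 := fun ξ ↦ by
    simp [hQ, mulVec_neg]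
  have hKne : K.Nonempty := hKint.mono interior_subset
  have hpos : ∀ ξ, ξ ≠ 0 → 0 < suppFun K ξ := fun ξ ↦ suppFun_pos hKcpt hKint heven
  have hnonneg : ∀ ξ, 0 ≤ suppFun K ξ := fun ξ ↦ by
    rcases eq_or_ne ξ 0 with rfl | hξ
    · exact (suppFun_zero hKne).ge
    · exact (hpos ξ hξ).le
  have hMpsd : M.PosSemidef := .of_dotProduct_mulVec_nonneg (isHermitian_iff_isSymm.mpr hMsymm)
    fun x ↦ by simpa [← hQ] using sq_nonneg (suppFun K (WithLp.toLp 2 x))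
  obtain ⟨T, hT⟩ := hMpsd.exists_norm_sq_eq
  have hTK : ∀ ξ, suppFun K ξ = ‖T ξ‖ := fun ξ ↦ by
    rw [← sq_eq_sq₀ (hnonneg ξ) (norm_nonneg _), hT, hQ]
  have hTinj : Function.Injective T := (injective_iff_map_eq_zero T).mpr fun ξ hξ ↦ by
    by_contra hne
    simpa [hTK, hξ] using hpos ξ hne
  exact ⟨T.adjoint, LinearMap.bijective_adjoint_of_injective hTinj,
    eq_adjoint_image_closedBall_of_suppFun_eq_norm hKcpt hKconv hKne T hTK⟩

theorem ellipsoid_of_quadratic_support_function_squared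
    {n : ℕ} (hn : 1 ≤ n) (K : Set (EuclideanSpace ℝ (Fin n)))
    (hKcpt : IsCompact K) (hKconv : Convex ℝ K) (hKint : (interior K).Nonempty)
    (P : MvPolynomial (Fin n) ℝ) (hP : P.IsHomogeneous 2)
    (hsupp : ∀ ξ : EuclideanSpace ℝ (Fin n),
      (suppFun K ξ) ^ 2 = MvPolynomial.eval (fun i => ξ i) P) :
    ∃ L : EuclideanSpace ℝ (Fin n) →ₗ[ℝ] EuclideanSpace ℝ (Fin n),
      Function.Bijective L ∧ K = L '' Metric.closedBall 0 1 :=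
  ellipsoid_of_quadratic_support_function_squared_general K hKcpt hKconv hKint P hP hsupp
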